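/- arXiv:2104.11794 — 2 statements merged into one kernel-verified Lean document; each statement's English description precedes it below -/
import Mathlib

section
/- Let A be a nondegenerate symmetric d×d integer matrix, t ∈ ℤ, and S_q(c) = Σ*_{a mod q} Σ_{b mod q} e_q(a((1/2)Ab·b − t) + c·b) (with (1/2)Ab·b ∈ ℤ for b ∈ ℤ^d). Then |S_q(c)| ≤ C_A · q^{d/2+1} uniformly in c ∈ ℤ^d and q ≥ 1, where C_A depends only on A. -/
/-!
For `a` coprime to `q`, write `T_a` for the inner sum over `b mod q`. The phase
`f(b) = a(½ b·Ab - t) + c·b` is quadratic: `f(b + w) = f(b) + g(w) + a b·Aw`. Expanding `|T_a|²`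
and substituting `b ↦ b + w` (Weyl differencing) leaves `Σ_w e_q(g w) Σ_b e_q(a b·Aw)`; the inner
sum is `q^d` if `q ∣ Aw` and `0` otherwise. Multiplying by `adj A`, `q ∣ Aw` forces
`q ∣ det A · w_i` for every `i`, which has at most `|det A|^d` solutions `w mod q`. Hence
`|T_a| ≤ (q |det A|)^{d/2}`, and there are at most `q` values of `a`.
-/

open Finset

/-- The exponential sum `S_q(c) = Σ*_{a mod q} Σ_{b mod q} e_q(a((1/2)Ab·b − t) + c·b)`. -/
noncomputable def Sq (d : ℕ) (A : Matrix (Fin d) (Fin d) ℤ) (t : ℤ) (q : ℕ)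
    (c : Fin d → ℤ) : ℂ :=
  ∑ a ∈ (Finset.range q).filter (fun a => Nat.gcd a q = 1),
    ∑ b ∈ Fintype.piFinset (fun _ : Fin d => Finset.range q),
      Complex.exp (2 * Real.pi * Complex.I *
        (((a : ℤ) * ((∑ i, ∑ j, A i j * (b i : ℤ) * (b j : ℤ)) / 2 - t)
          + ∑ i, c i * (b i : ℤ) : ℤ) : ℂ) / (q : ℂ))

open Matrix

section HalfQuadForm

variable {ι : Type*} [Fintype ι]

lemma sum_sum_mul_mul_eq_dotProduct_mulVec {R : Type*} [CommSemiring R] (A : Matrix ι ι R)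
    (x : ι → R) : ∑ i, ∑ j, A i j * x i * x j = x ⬝ᵥ A *ᵥ x := by
  simp only [dotProduct, mulVec, mul_sum]
  exact sum_congr rfl fun i _ => sum_congr rfl fun j _ => by ring

lemma Matrix.IsSymm.add_dotProduct_mulVec_add {R : Type*} [CommSemiring R] {A : Matrix ι ι R}
    (hA : A.IsSymm) (x y : ι → R) :
    (x + y) ⬝ᵥ A *ᵥ (x + y) = x ⬝ᵥ A *ᵥ x + y ⬝ᵥ A *ᵥ y + 2 * (x ⬝ᵥ A *ᵥ y) := by
  have hyx : y ⬝ᵥ A *ᵥ x = x ⬝ᵥ A *ᵥ y := by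
    rw [dotProduct_comm, ← vecMul_transpose, hA.eq, dotProduct_mulVec]
  simp only [mulVec_add, dotProduct_add, add_dotProduct, hyx]
  ring

def halfQuad (A : Matrix ι ι ℤ) (x : ι → ℤ) : ℤ := (∑ i, ∑ j, A i j * x i * x j) / 2

variable {A : Matrix ι ι ℤ}

lemma two_mul_halfQuad (heven : ∀ b : ι → ℤ, (2 : ℤ) ∣ ∑ i, ∑ j, A i j * b i * b j)
    (x : ι → ℤ) : 2 * halfQuad A x = x ⬝ᵥ A *ᵥ x := by
  rw [halfQuad, Int.mul_ediv_cancel' (heven x), sum_sum_mul_mul_eq_dotProduct_mulVec]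

lemma halfQuad_add (hA : A.IsSymm) (heven : ∀ b : ι → ℤ, (2 : ℤ) ∣ ∑ i, ∑ j, A i j * b i * b j)
    (x y : ι → ℤ) : halfQuad A (x + y) = halfQuad A x + halfQuad A y + x ⬝ᵥ A *ᵥ y := by
  apply mul_left_cancel₀ (two_ne_zero (α := ℤ))
  rw [mul_add, mul_add, two_mul_halfQuad heven, two_mul_halfQuad heven, two_mul_halfQuad heven,
    hA.add_dotProduct_mulVec_add]

lemma halfQuad_smul (heven : ∀ b : ι → ℤ, (2 : ℤ) ∣ ∑ i, ∑ j, A i j * b i * b j)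
    (n : ℤ) (x : ι → ℤ) : halfQuad A (n • x) = n ^ 2 * halfQuad A x := by
  apply mul_left_cancel₀ (two_ne_zero (α := ℤ))
  rw [two_mul_halfQuad heven, mul_left_comm, two_mul_halfQuad heven, mulVec_smul,
    dotProduct_smul, smul_dotProduct, smul_eq_mul, smul_eq_mul]
  ring

lemma halfQuad_intCast_eq (hA : A.IsSymm)
    (heven : ∀ b : ι → ℤ, (2 : ℤ) ∣ ∑ i, ∑ j, A i j * b i * b j) {q : ℕ} {x y : ι → ℤ}
    (hxy : ∀ i, (x i : ZMod q) = y i) : (halfQuad A x : ZMod q) = halfQuad A y := by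
  choose v hv using fun i => (ZMod.intCast_eq_intCast_iff_dvd_sub _ _ q).1 (hxy i)
  have hy : y = x + (q : ℤ) • v := funext fun i => by simp [← hv i]
  rw [hy, halfQuad_add hA heven, halfQuad_smul heven, mulVec_smul, dotProduct_smul, smul_eq_mul]
  push_cast
  simp

variable {q : ℕ}

/-- For even `q`, `½ x·Ax` is not a polynomial over `ZMod q`; computing it on the lift through
`val` is legitimate because `A` is even (`halfQuad_intCast_eq`). -/
def halfQuadMod (A : Matrix ι ι ℤ) (x : ι → ZMod q) : ZMod q :=
  halfQuad A fun i => ((x i).val : ℤ)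

lemma halfQuadMod_intCast [NeZero q] (hA : A.IsSymm)
    (heven : ∀ b : ι → ℤ, (2 : ℤ) ∣ ∑ i, ∑ j, A i j * b i * b j) (y : ι → ℤ) :
    halfQuadMod A (fun i => (y i : ZMod q)) = halfQuad A y :=
  halfQuad_intCast_eq hA heven fun i => by simp

lemma halfQuadMod_add [NeZero q] (hA : A.IsSymm)
    (heven : ∀ b : ι → ℤ, (2 : ℤ) ∣ ∑ i, ∑ j, A i j * b i * b j) (x w : ι → ZMod q) :
    halfQuadMod A (x + w) =
      halfQuadMod A x + halfQuadMod A w + x ⬝ᵥ A.map (Int.cast : ℤ → ZMod q) *ᵥ w := by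
  set X : ι → ℤ := fun i => ((x i).val : ℤ)
  set W : ι → ℤ := fun i => ((w i).val : ℤ)
  have hx : x = fun i => (X i : ZMod q) := funext fun i => by simp [X]
  have hw : w = fun i => (W i : ZMod q) := funext fun i => by simp [W]
  have hxw : x + w = fun i => ((X + W) i : ZMod q) := by
    rw [hx, hw]; funext i; simp
  rw [hxw, halfQuadMod_intCast hA heven, halfQuad_add hA heven, hx, hw,
    halfQuadMod_intCast hA heven, halfQuadMod_intCast hA heven]
  push_cast
  congr 1
  rw [← eq_intCast (Int.castRingHom (ZMod q)), RingHom.map_dotProduct]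
  congr 1
  funext i
  simpa [Function.comp_def] using (Int.castRingHom (ZMod q)).map_mulVec A W i

end HalfQuadForm

lemma AddChar.map_sum_eq_prod {A M κ : Type*} [AddCommMonoid A] [CommMonoid M] (ψ : AddChar A M)
    (s : Finset κ) (f : κ → A) : ψ (∑ i ∈ s, f i) = ∏ i ∈ s, ψ (f i) := by
  induction s using Finset.cons_induction with
  | empty => simp
  | cons a s ha ih => rw [sum_cons, prod_cons, ψ.map_add_eq_mul, ih]

section Differencing

variable {R ι : Type*} [CommRing R] [Fintype R] [Fintype ι] [DecidableEq ι] {ψ : AddChar R ℂ}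

lemma sum_addChar_dotProduct [DecidableEq R] (hψ : ψ.IsPrimitive) (v : ι → R) :
    ∑ x : ι → R, ψ (x ⬝ᵥ v) = if v = 0 then (Fintype.card R : ℂ) ^ Fintype.card ι else 0 := by
  simp only [dotProduct, AddChar.map_sum_eq_prod]
  rw [← Fintype.prod_sum (fun i r => ψ (r * v i))]
  simp only [AddChar.sum_mulShift _ hψ, Nat.cast_ite, Nat.cast_zero, prod_ite_zero, prod_const,
    card_univ, mem_univ, true_implies, funext_iff, Pi.zero_apply]

lemma conj_mul_sum_addChar_eq (f g : (ι → R) → R) (L : (ι → R) → ι → R)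
    (hf : ∀ x w, f (x + w) = f x + g w + x ⬝ᵥ L w) :
    starRingEnd ℂ (∑ x, ψ (f x)) * ∑ x, ψ (f x) = ∑ w, ψ (g w) * ∑ x, ψ (x ⬝ᵥ L w) := by
  calc starRingEnd ℂ (∑ x, ψ (f x)) * ∑ x, ψ (f x)
      = ∑ x, ∑ w, ψ (-f x) * ψ (f (x + w)) := by
        simp only [map_sum, sum_mul_sum, ← AddChar.map_neg_eq_conj]
        exact sum_congr rfl fun x _ => (Fintype.sum_equiv (Equiv.addLeft x) _ _ fun _ => rfl).symm
    _ = ∑ x, ∑ w, ψ (g w) * ψ (x ⬝ᵥ L w) := by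
        simp only [← AddChar.map_add_eq_mul, hf]
        exact sum_congr rfl fun x _ => sum_congr rfl fun w _ => by ring_nf
    _ = ∑ w, ψ (g w) * ∑ x, ψ (x ⬝ᵥ L w) := by
        rw [sum_comm]; simp only [mul_sum]

theorem norm_sum_addChar_sq_le [DecidableEq R] (hψ : ψ.IsPrimitive) (f g : (ι → R) → R)
    (L : (ι → R) → ι → R) (hf : ∀ x w, f (x + w) = f x + g w + x ⬝ᵥ L w) :
    ‖∑ x, ψ (f x)‖ ^ 2 ≤ Fintype.card R ^ Fintype.card ι * #{w | L w = 0} := by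
  have hsq : (‖∑ x, ψ (f x)‖ ^ 2 : ℝ) = ‖starRingEnd ℂ (∑ x, ψ (f x)) * ∑ x, ψ (f x)‖ := by
    rw [norm_mul, Complex.norm_conj, sq]
  rw [hsq, conj_mul_sum_addChar_eq f g L hf]
  calc ‖∑ w, ψ (g w) * ∑ x, ψ (x ⬝ᵥ L w)‖
      ≤ ∑ w, ‖ψ (g w) * ∑ x, ψ (x ⬝ᵥ L w)‖ := norm_sum_le _ _
    _ = ∑ w, if L w = 0 then (Fintype.card R : ℝ) ^ Fintype.card ι else 0 := by
        refine sum_congr rfl fun w _ => ?_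
        rw [norm_mul, AddChar.norm_apply, one_mul, sum_addChar_dotProduct hψ]
        split_ifs <;> simp
    _ = Fintype.card R ^ Fintype.card ι * #{w | L w = 0} := by
        rw [sum_ite, sum_const_zero, add_zero, sum_const, nsmul_eq_mul, mul_comm]

end Differencing

section Counting

variable {q : ℕ} [NeZero q]

lemma ZMod.card_intCast_mul_eq_zero_le {D : ℤ} (hD : D ≠ 0) :
    #{z : ZMod q | (D : ZMod q) * z = 0} ≤ D.natAbs := by
  refine (card_le_card fun z hz => ?_).trans
    (IsAddCyclic.card_nsmul_eq_zero_le (Int.natAbs_pos.2 hD))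
  simp only [mem_filter, mem_univ, true_and] at hz ⊢
  rcases Int.natAbs_eq D with h | h
  · rwa [nsmul_eq_mul, ← Int.cast_natCast, ← h]
  · rw [nsmul_eq_mul, ← Int.cast_natCast, ← neg_neg (D.natAbs : ℤ), ← h, Int.cast_neg,
      neg_mul, hz, neg_zero]

lemma card_map_intCast_mulVec_eq_zero_le {ι : Type*} [Fintype ι] [DecidableEq ι]
    {A : Matrix ι ι ℤ} (hdet : A.det ≠ 0) :
    #{w : ι → ZMod q | A.map (Int.cast : ℤ → ZMod q) *ᵥ w = 0}
      ≤ A.det.natAbs ^ Fintype.card ι := by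
  calc #{w : ι → ZMod q | A.map (Int.cast : ℤ → ZMod q) *ᵥ w = 0}
      ≤ #(Fintype.piFinset fun _ : ι => ({z | (A.det : ZMod q) * z = 0} : Finset (ZMod q))) := by
        refine card_le_card fun w hw => ?_
        simp only [mem_filter, mem_univ, true_and, Fintype.mem_piFinset] at hw ⊢
        intro i
        have hdetw : (A.map (Int.cast : ℤ → ZMod q)).det • w = 0 := by
          rw [← one_mulVec w, ← smul_mulVec, ← adjugate_mul, ← mulVec_mulVec, hw, mulVec_zero]
        simpa [← Int.cast_det] using congrFun hdetw i
    _ ≤ A.det.natAbs ^ Fintype.card ι := by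
        rw [Fintype.card_piFinset, prod_const, card_univ]
        exact Nat.pow_le_pow_left (ZMod.card_intCast_mul_eq_zero_le hdet) _

end Counting

section QuadPhase

variable {ι : Type*} [Fintype ι] {q : ℕ} {A : Matrix ι ι ℤ}

def quadPhase (A : Matrix ι ι ℤ) (t : ℤ) (u : ZMod q) (c x : ι → ZMod q) : ZMod q :=
  u * (halfQuadMod A x - t) + c ⬝ᵥ x

lemma quadPhase_add [NeZero q] (hA : A.IsSymm)
    (heven : ∀ b : ι → ℤ, (2 : ℤ) ∣ ∑ i, ∑ j, A i j * b i * b j) (t : ℤ) (u : ZMod q)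
    (c x w : ι → ZMod q) :
    quadPhase A t u c (x + w) = quadPhase A t u c x + (u * halfQuadMod A w + c ⬝ᵥ w)
      + x ⬝ᵥ u • (A.map (Int.cast : ℤ → ZMod q) *ᵥ w) := by
  simp only [quadPhase, halfQuadMod_add hA heven, dotProduct_add, dotProduct_smul, smul_eq_mul]
  ring

theorem norm_sum_stdAddChar_quadPhase_le [DecidableEq ι] [NeZero q] (hA : A.IsSymm)
    (hdet : A.det ≠ 0) (heven : ∀ b : ι → ℤ, (2 : ℤ) ∣ ∑ i, ∑ j, A i j * b i * b j) (t : ℤ)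
    {u : ZMod q} (hu : IsUnit u) (c : ι → ZMod q) :
    ‖∑ x, ZMod.stdAddChar (quadPhase A t u c x)‖
      ≤ √(((q : ℝ) * A.det.natAbs) ^ Fintype.card ι) := by
  have hker : #{w : ι → ZMod q | u • (A.map (Int.cast : ℤ → ZMod q) *ᵥ w) = 0}
      ≤ A.det.natAbs ^ Fintype.card ι := by
    simpa only [hu.smul_eq_zero] using card_map_intCast_mulVec_eq_zero_le hdet
  refine Real.le_sqrt_of_sq_le ((norm_sum_addChar_sq_le (ZMod.isPrimitive_stdAddChar q) _ _ _
    (quadPhase_add hA heven t u c)).trans ?_)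
  rw [ZMod.card, mul_pow]
  gcongr
  exact_mod_cast hker

end QuadPhase

lemma Sq_eq_sum_quadPhase {d : ℕ} {A : Matrix (Fin d) (Fin d) ℤ} (hA : A.IsSymm)
    (heven : ∀ b : Fin d → ℤ, (2 : ℤ) ∣ ∑ i, ∑ j, A i j * b i * b j) (t : ℤ) (q : ℕ) [NeZero q]
    (c : Fin d → ℤ) :
    Sq d A t q c = ∑ a ∈ (range q).filter (fun a => Nat.gcd a q = 1),
      ∑ x, ZMod.stdAddChar (quadPhase A t (a : ZMod q) (fun i => (c i : ZMod q)) x) := by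
  refine sum_congr rfl fun a _ => ?_
  refine sum_nbij' (fun b i => (b i : ZMod q)) (fun x i => (x i).val) (fun _ _ => mem_univ _)
    (fun x _ => Fintype.mem_piFinset.2 fun i => mem_range.2 (x i).val_lt) (fun b hb => ?_)
    (fun x _ => funext fun i => ZMod.natCast_zmod_val (x i)) (fun b _ => ?_)
  · exact funext fun i => ZMod.val_cast_of_lt (mem_range.1 (Fintype.mem_piFinset.1 hb i))
  · have hb : (fun i => (b i : ZMod q)) = fun i => ((b i : ℤ) : ZMod q) := by simp
    rw [← ZMod.stdAddChar_coe, quadPhase, hb, halfQuadMod_intCast hA heven]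
    push_cast
    rfl

/-- For a nondegenerate symmetric integer matrix `A`,
`|S_q(c)| ≤ C_A q^(d/2+1)` uniformly in `c` and `q ≥ 1`. -/
theorem Sq_bound (d : ℕ) (A : Matrix (Fin d) (Fin d) ℤ) (hA : A.IsSymm) (hdet : A.det ≠ 0)
    (heven : ∀ b : Fin d → ℤ, (2 : ℤ) ∣ ∑ i, ∑ j, A i j * b i * b j) (t : ℤ) :
    ∃ C > 0, ∀ q : ℕ, 1 ≤ q → ∀ c : Fin d → ℤ,
      ‖Sq d A t q c‖ ≤ C * (q : ℝ) ^ ((d : ℝ) / 2 + 1) := by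
  refine ⟨(A.det.natAbs : ℝ) ^ ((d : ℝ) / 2), by positivity, fun q hq c => ?_⟩
  have : NeZero q := ⟨by omega⟩
  have hunits : #((range q).filter (fun a => Nat.gcd a q = 1)) ≤ q :=
    (card_filter_le _ _).trans (card_range q).le
  calc ‖Sq d A t q c‖
      ≤ #((range q).filter (fun a => Nat.gcd a q = 1)) • √(((q : ℝ) * A.det.natAbs) ^ d) := by
        rw [Sq_eq_sum_quadPhase hA heven]
        refine (norm_sum_le _ _).trans (sum_le_card_nsmul _ _ _ fun a ha => ?_)
        have hu : IsUnit (a : ZMod q) := (ZMod.isUnit_iff_coprime a q).2 (mem_filter.1 ha).2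
        simpa using norm_sum_stdAddChar_quadPhase_le hA hdet heven t hu _
    _ ≤ q * √(((q : ℝ) * A.det.natAbs) ^ d) := by
        rw [nsmul_eq_mul]
        gcongr
    _ = (A.det.natAbs : ℝ) ^ ((d : ℝ) / 2) * (q : ℝ) ^ ((d : ℝ) / 2 + 1) := by
        rw [Real.sqrt_eq_rpow, ← Real.rpow_natCast, ← Real.rpow_mul (by positivity),
          Real.mul_rpow (by positivity) (by positivity), Real.rpow_add (by positivity),
          Real.rpow_one]
        ring_nf
end

section
/- Let w : ℝ^{2m} → ℝ be continuous with |w(z)| ≤ C⟨z⟩^{-n} for some n > 2m - 2, where ⟨z⟩ = max{1,|z|}. Then w is integrable over the cone Σ_0 = {(x,y) ∈ ℝ^m × ℝ^m : x·y = 0} with respect to the measure μ_0 which disintegrates as μ_0(dz) = |x|^{-1} dx ⊗ d_{x⊥}y (Lebesgue measure on the hyperplane x⊥ ⊂ ℝ^m, fibered over x ∈ ℝ^m∖{0}), i.e. ∫_{ℝ^m∖{0}} |x|^{-1} ∫_{x⊥} |w(x,y)| d_{x⊥}y dx < ∞. -/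
/-!
Writing `⟨z⟩ = max 1 ‖z‖`, we have `⟨(x, y)⟩ ≥ max ⟨x⟩ ⟨y⟩`, so the weight splits as
`⟨(x, y)⟩^{-n} ≤ ⟨x⟩^{-n/2} ⟨y⟩^{-n/2}`. For `x ≠ 0` the fibre `x⊥` is isometric to `ℝ^{m-1}`,
so the fibre integral is at most `C ⟨x⟩^{-n/2} ∫_{ℝ^{m-1}} ⟨y⟩^{-n/2} dy`, finite as
`n/2 > m - 1`. What remains is `∫_{ℝ^m} |x|^{-1} ⟨x⟩^{-n/2} dx`, which in polar coordinates is
`∫_0^∞ r^{m-2} ⟨r⟩^{-n/2} dr < ∞`.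
-/

open MeasureTheory Set Module

theorem integrableOn_Ioi_pow_mul_max_one_rpow_neg (j : ℕ) {b : ℝ} (hb : j + 1 < b) :
    IntegrableOn (fun t : ℝ => t ^ j * max 1 t ^ (-b)) (Ioi 0) := by
  rw [← Ioc_union_Ioi_eq_Ioi zero_le_one]
  refine IntegrableOn.union ?_ ?_
  · refine ((continuous_pow j).integrableOn_Icc.mono_set Ioc_subset_Icc_self).congr_fun
      (fun t ht => ?_) measurableSet_Ioc
    simp [max_eq_left ht.2]
  · refine (integrableOn_Ioi_rpow_of_lt (a := j - b) (by linarith) one_pos).congr_fun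
      (fun t ht => ?_) measurableSet_Ioi
    have ht0 : (0 : ℝ) < t := one_pos.trans ht
    dsimp only
    rw [max_eq_right (le_of_lt ht), Real.rpow_sub ht0, Real.rpow_natCast, Real.rpow_neg ht0.le,
      div_eq_mul_inv]

section Radial

variable {E : Type*} [NormedAddCommGroup E] [NormedSpace ℝ E] [FiniteDimensional ℝ E]
  [MeasurableSpace E] [BorelSpace E] (μ : Measure E) [μ.IsAddHaarMeasure]

theorem integrable_max_one_norm_rpow_neg (hd : 1 ≤ finrank ℝ E) {b : ℝ}
    (hb : (finrank ℝ E : ℝ) < b) :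
    Integrable (fun x : E => max 1 ‖x‖ ^ (-b)) μ := by
  have : Nontrivial E := Module.nontrivial_of_finrank_pos (R := ℝ) hd
  rw [integrable_fun_norm_addHaar μ (f := fun t => max 1 t ^ (-b))]
  refine integrableOn_Ioi_pow_mul_max_one_rpow_neg _ ?_
  rwa [Nat.cast_sub hd, Nat.cast_one, sub_add_cancel]

theorem integrable_inv_norm_mul_max_one_norm_rpow_neg (hd : 2 ≤ finrank ℝ E) {b : ℝ}
    (hb : (finrank ℝ E : ℝ) - 1 < b) :
    Integrable (fun x : E => ‖x‖⁻¹ * max 1 ‖x‖ ^ (-b)) μ := by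
  have : Nontrivial E := Module.nontrivial_of_finrank_pos (R := ℝ) (by omega)
  rw [integrable_fun_norm_addHaar μ (f := fun t => t⁻¹ * max 1 t ^ (-b))]
  refine (integrableOn_Ioi_pow_mul_max_one_rpow_neg (finrank ℝ E - 2) (b := b) ?_).congr_fun
    (fun t (ht : 0 < t) => ?_) measurableSet_Ioi
  · rw [Nat.cast_sub hd]; push_cast; linarith
  · obtain ⟨k, hk⟩ : ∃ k, finrank ℝ E = k + 2 := ⟨_, (Nat.sub_add_cancel hd).symm⟩
    rw [hk, show k + 2 - 2 = k by omega, show k + 2 - 1 = k + 1 by omega, smul_eq_mul, pow_succ]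
    field_simp

end Radial

theorem max_one_norm_prod_rpow_neg_le {E F : Type*} [SeminormedAddCommGroup E]
    [SeminormedAddCommGroup F] {b : ℝ} (hb : 0 ≤ b) (x : E) (y : F) :
    max 1 ‖(x, y)‖ ^ (-(2 * b)) ≤ max 1 ‖x‖ ^ (-b) * max 1 ‖y‖ ^ (-b) := by
  rw [two_mul, neg_add, Real.rpow_add (by positivity)]
  gcongr ?_ * ?_ <;>
    refine Real.rpow_le_rpow_of_nonpos (by positivity) (max_le_max le_rfl ?_) (by linarith)
  exacts [norm_fst_le (x, y), norm_snd_le (x, y)]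

theorem lintegral_fun_norm_eq_euclideanSpace {F : Type*} [NormedAddCommGroup F]
    [InnerProductSpace ℝ F] [FiniteDimensional ℝ F] [MeasurableSpace F] [BorelSpace F]
    (φ : ℝ → ENNReal) :
    ∫⁻ y : F, φ ‖y‖ = ∫⁻ y : EuclideanSpace ℝ (Fin (finrank ℝ F)), φ ‖y‖ := by
  let e := (stdOrthonormalBasis ℝ F).repr
  rw [← e.measurePreserving.lintegral_comp_emb e.toMeasurableEquiv.measurableEmbedding]
  simp

theorem lintegral_orthogonal_span_singleton_le {E : Type*} [NormedAddCommGroup E]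
    [InnerProductSpace ℝ E] [FiniteDimensional ℝ E] [MeasurableSpace E] [BorelSpace E]
    (w : E × E → ℝ) {C b : ℝ} (hb : 0 ≤ b) (hbd : ∀ z, |w z| ≤ C * max 1 ‖z‖ ^ (-(2 * b)))
    {x : E} (hx : x ≠ 0) :
    ∫⁻ y : (ℝ ∙ x)ᗮ, ENNReal.ofReal |w (x, y)| ≤
      ENNReal.ofReal C * ENNReal.ofReal (max 1 ‖x‖ ^ (-b)) *
        ∫⁻ y : EuclideanSpace ℝ (Fin (finrank ℝ E - 1)), ENNReal.ofReal (max 1 ‖y‖ ^ (-b)) := by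
  have hC : 0 ≤ C := by simpa using (abs_nonneg _).trans (hbd 0)
  have hrank : finrank ℝ (ℝ ∙ x)ᗮ = finrank ℝ E - 1 := by
    have := Submodule.finrank_add_finrank_orthogonal (ℝ ∙ x)
    rw [finrank_span_singleton hx] at this
    omega
  calc ∫⁻ y : (ℝ ∙ x)ᗮ, ENNReal.ofReal |w (x, y)|
      ≤ ∫⁻ y : (ℝ ∙ x)ᗮ, ENNReal.ofReal C * ENNReal.ofReal (max 1 ‖x‖ ^ (-b)) *
          ENNReal.ofReal (max 1 ‖y‖ ^ (-b)) := by
        refine lintegral_mono fun y => ?_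
        rw [← ENNReal.ofReal_mul' (by positivity), ← ENNReal.ofReal_mul' (by positivity)]
        refine ENNReal.ofReal_le_ofReal ((hbd (x, y)).trans ?_)
        rw [mul_assoc]
        exact mul_le_mul_of_nonneg_left (max_one_norm_prod_rpow_neg_le hb x (y : E)) hC
    _ = ENNReal.ofReal C * ENNReal.ofReal (max 1 ‖x‖ ^ (-b)) *
          ∫⁻ y : (ℝ ∙ x)ᗮ, ENNReal.ofReal (max 1 ‖y‖ ^ (-b)) :=
        lintegral_const_mul' _ _ (ENNReal.mul_ne_top ENNReal.ofReal_ne_top ENNReal.ofReal_ne_top)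
    _ = _ := by
        rw [lintegral_fun_norm_eq_euclideanSpace (fun t => ENNReal.ofReal (max 1 t ^ (-b))), hrank]

theorem cone_integrable_general (m : ℕ) (hm : 2 ≤ m)
    (w : EuclideanSpace ℝ (Fin m) × EuclideanSpace ℝ (Fin m) → ℝ)
    (C n : ℝ) (hn : 2 * (m : ℝ) - 2 < n)
    (hbd : ∀ z, |w z| ≤ C * (max 1 ‖z‖) ^ (-n)) :
    ∫⁻ x : EuclideanSpace ℝ (Fin m),
      ENNReal.ofReal (‖x‖⁻¹) *
        ∫⁻ y : ((ℝ ∙ x)ᗮ : Submodule ℝ (EuclideanSpace ℝ (Fin m))),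
          ENNReal.ofReal |w (x, (y : EuclideanSpace ℝ (Fin m)))| < ⊤ := by
  have hd : finrank ℝ (EuclideanSpace ℝ (Fin m)) = m := finrank_euclideanSpace_fin
  have hb : (m : ℝ) - 1 < n / 2 := by linarith
  have hb0 : 0 ≤ n / 2 := by linarith [show (2 : ℝ) ≤ m by exact_mod_cast hm]
  have hbd' : ∀ z, |w z| ≤ C * max 1 ‖z‖ ^ (-(2 * (n / 2))) := by
    rwa [mul_div_cancel₀ n two_ne_zero]
  set J := ∫⁻ y : EuclideanSpace ℝ (Fin (m - 1)), ENNReal.ofReal (max 1 ‖y‖ ^ (-(n / 2)))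
  have hJ : J < ⊤ := (integrable_max_one_norm_rpow_neg volume (by simp; omega)
    (by simp [Nat.cast_sub (one_le_two.trans hm)]; linarith)).lintegral_lt_top
  have hfiber : ∀ x : EuclideanSpace ℝ (Fin m),
      ENNReal.ofReal ‖x‖⁻¹ * ∫⁻ y : (ℝ ∙ x)ᗮ, ENNReal.ofReal |w (x, y)| ≤
        ENNReal.ofReal C * J * ENNReal.ofReal (‖x‖⁻¹ * max 1 ‖x‖ ^ (-(n / 2))) := by
    intro x
    rcases eq_or_ne x 0 with rfl | hx
    · simp
    have hle := lintegral_orthogonal_span_singleton_le w hb0 hbd' hx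
    rw [hd] at hle
    calc _ ≤ ENNReal.ofReal ‖x‖⁻¹ *
          (ENNReal.ofReal C * ENNReal.ofReal (max 1 ‖x‖ ^ (-(n / 2))) * J) := by gcongr
      _ = _ := by rw [ENNReal.ofReal_mul (by positivity)]; ring
  calc _ ≤ ∫⁻ x : EuclideanSpace ℝ (Fin m),
        ENNReal.ofReal C * J * ENNReal.ofReal (‖x‖⁻¹ * max 1 ‖x‖ ^ (-(n / 2))) :=
      lintegral_mono hfiber
    _ = ENNReal.ofReal C * J * ∫⁻ x : EuclideanSpace ℝ (Fin m),
        ENNReal.ofReal (‖x‖⁻¹ * max 1 ‖x‖ ^ (-(n / 2))) :=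
      lintegral_const_mul' _ _ (ENNReal.mul_ne_top ENNReal.ofReal_ne_top hJ.ne)
    _ < ⊤ := ENNReal.mul_lt_top (ENNReal.mul_lt_top ENNReal.ofReal_lt_top hJ)
      (integrable_inv_norm_mul_max_one_norm_rpow_neg volume (by omega)
        (by rw [hd]; linarith)).lintegral_lt_top

/-- If `w : ℝ^m × ℝ^m → ℝ` is continuous with `|w z| ≤ C ⟨z⟩^{-n}` for some
`n > 2m - 2`, then `w` is integrable over the cone `{x·y = 0}` with respect to the
measure `μ₀` disintegrating as `|x|^{-1} dx ⊗ d_{x⊥} y`: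
`∫_{x} |x|^{-1} ∫_{x⊥} |w(x,y)| dy dx < ∞`. -/
theorem cone_integrable (m : ℕ) (hm : 2 ≤ m)
    (w : EuclideanSpace ℝ (Fin m) × EuclideanSpace ℝ (Fin m) → ℝ)
    (hw : Continuous w) (C n : ℝ) (hn : 2 * (m : ℝ) - 2 < n)
    (hbd : ∀ z, |w z| ≤ C * (max 1 ‖z‖) ^ (-n)) :
    ∫⁻ x : EuclideanSpace ℝ (Fin m),
      ENNReal.ofReal (‖x‖⁻¹) *
        ∫⁻ y : ((ℝ ∙ x)ᗮ : Submodule ℝ (EuclideanSpace ℝ (Fin m))),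
          ENNReal.ofReal |w (x, (y : EuclideanSpace ℝ (Fin m)))| < ⊤ :=
  cone_integrable_general m hm w C n hn hbd
end
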